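/- arXiv:1408.4195 — 4 statements merged into one kernel-verified Lean document; each statement's English description precedes it below -/
import Mathlib

section
/- For any C^4 functions ζ, η : ℝ^N → ℝ, the pointwise identity Δζ · Δ(ζη²) = [Δ(ζη)]² − 4(∇ζ·∇η)² − ζ²|Δη|² + 2ζΔζ|∇η|² − 4ζΔη(∇ζ·∇η) holds at every point of ℝ^N. -/
open MeasureTheory

/-- The Euclidean Laplacian of `f : ℝ^N → ℝ`, as the sum of second partial derivatives. -/
noncomputable def lap {N : ℕ} (f : EuclideanSpace ℝ (Fin N) → ℝ)
    (x : EuclideanSpace ℝ (Fin N)) : ℝ :=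
  ∑ i : Fin N,
    fderiv ℝ (fun y => fderiv ℝ f y (EuclideanSpace.single i 1)) x (EuclideanSpace.single i 1)

/-!
Writing `ζη² = (ζη)·η`, two applications of the Leibniz rule
`Δ(fg) = f Δg + g Δf + 2 ∇f·∇g`, together with `∇(ζη)·∇η = ζ|∇η|² + η ∇ζ·∇η`, express both
sides through the values of `ζ, η, Δζ, Δη, ∇ζ·∇η, |∇η|²` at the point; the identity is then a
polynomial identity in these six numbers.
-/

section DirectionalDerivative

variable {E : Type*} [NormedAddCommGroup E] [NormedSpace ℝ E] {f g : E → ℝ}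

lemma ContDiff.differentiable_fderiv_apply (hf : ContDiff ℝ 2 f) (v : E) :
    Differentiable ℝ (fun y => fderiv ℝ f y v) :=
  ((hf.fderiv_right (m := 1) le_rfl).clm_apply contDiff_const).differentiable one_ne_zero

lemma fderiv_mul_apply_eq (hf : Differentiable ℝ f) (hg : Differentiable ℝ g) (v : E) :
    (fun y => fderiv ℝ (fun z => f z * g z) y v)
      = fun y => f y * fderiv ℝ g y v + g y * fderiv ℝ f y v := by
  funext y
  simp [fderiv_fun_mul (hf y) (hg y)]

lemma fderiv_fderiv_mul_apply (hf : ContDiff ℝ 2 f) (hg : ContDiff ℝ 2 g) (x v : E) :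
    fderiv ℝ (fun y => fderiv ℝ (fun z => f z * g z) y v) x v
      = f x * fderiv ℝ (fun y => fderiv ℝ g y v) x v
        + g x * fderiv ℝ (fun y => fderiv ℝ f y v) x v
        + 2 * (fderiv ℝ f x v * fderiv ℝ g x v) := by
  have hf1 : Differentiable ℝ f := hf.differentiable two_ne_zero
  have hg1 : Differentiable ℝ g := hg.differentiable two_ne_zero
  rw [fderiv_mul_apply_eq hf1 hg1,
    ((hf1 x).hasFDerivAt.fun_mul (hg.differentiable_fderiv_apply v x).hasFDerivAt).fun_add
      ((hg1 x).hasFDerivAt.fun_mul (hf.differentiable_fderiv_apply v x).hasFDerivAt) |>.fderiv]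
  simp only [add_apply, smul_apply, smul_eq_mul]
  ring

end DirectionalDerivative

lemma inner_gradient_mul_left {F : Type*} [NormedAddCommGroup F] [InnerProductSpace ℝ F]
    [CompleteSpace F] {f g : F → ℝ} {x : F} (hf : DifferentiableAt ℝ f x)
    (hg : DifferentiableAt ℝ g x) (v : F) :
    inner ℝ (gradient (fun y => f y * g y) x) v
      = f x * inner ℝ (gradient g x) v + g x * inner ℝ (gradient f x) v := by
  simp [fderiv_fun_mul hf hg]

section Euclidean

variable {N : ℕ} {f g : EuclideanSpace ℝ (Fin N) → ℝ}

lemma inner_gradient_eq_sum (x : EuclideanSpace ℝ (Fin N)) :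
    inner ℝ (gradient f x) (gradient g x)
      = ∑ i, fderiv ℝ f x (EuclideanSpace.single i 1)
          * fderiv ℝ g x (EuclideanSpace.single i 1) := by
  rw [← (EuclideanSpace.basisFun (Fin N) ℝ).sum_inner_mul_inner]
  simp [real_inner_comm (gradient g x)]

lemma lap_mul (hf : ContDiff ℝ 2 f) (hg : ContDiff ℝ 2 g) (x : EuclideanSpace ℝ (Fin N)) :
    lap (fun y => f y * g y) x
      = f x * lap g x + g x * lap f x + 2 * inner ℝ (gradient f x) (gradient g x) := by
  simp only [lap, fderiv_fderiv_mul_apply hf hg, inner_gradient_eq_sum, Finset.sum_add_distrib,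
    Finset.mul_sum]

end Euclidean

/-- For `C⁴` functions `ζ, η`, the pointwise identity
`Δζ · Δ(ζη²) = [Δ(ζη)]² − 4(∇ζ·∇η)² − ζ²|Δη|² + 2ζΔζ|∇η|² − 4ζΔη(∇ζ·∇η)`. -/
theorem stmt0 {N : ℕ} (ζ η : EuclideanSpace ℝ (Fin N) → ℝ)
    (hζ : ContDiff ℝ 4 ζ) (hη : ContDiff ℝ 4 η) (x : EuclideanSpace ℝ (Fin N)) :
    lap ζ x * lap (fun y => ζ y * (η y) ^ 2) x =
      (lap (fun y => ζ y * η y) x) ^ 2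
        - 4 * (inner ℝ (gradient ζ x) (gradient η x) : ℝ) ^ 2
        - (ζ x) ^ 2 * (lap η x) ^ 2
        + 2 * ζ x * lap ζ x * ‖gradient η x‖ ^ 2
        - 4 * ζ x * lap η x * (inner ℝ (gradient ζ x) (gradient η x) : ℝ) := by
  have hζ2 : ContDiff ℝ 2 ζ := hζ.of_le (by norm_num)
  have hη2 : ContDiff ℝ 2 η := hη.of_le (by norm_num)
  have hζη : (fun y => ζ y * η y ^ 2) = fun y => (ζ y * η y) * η y := by
    funext y; ring
  rw [hζη, lap_mul (hζ2.mul hη2) hη2, lap_mul hζ2 hη2,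
    inner_gradient_mul_left (hζ2.differentiable two_ne_zero x) (hη2.differentiable two_ne_zero x),
    ← real_inner_self_eq_norm_sq]
  ring
end

section
/- Let λ = (4+α+β)/(p−1) and define C(N,p,α,β) = (N−2)(2+β) + 2λ(N−4−β−λ) − β²/8. If N ≥ 5, p ≥ (N+4+2α+β)/(N−4−β), α > −4, and 0 ≤ β ≤ (N−4)/2, then C(N,p,α,β) > 0. -/
/-- With `λ = (4+α+β)/(p−1)` and `C(N,p,α,β) = (N−2)(2+β) + 2λ(N−4−β−λ) − β²/8`:
if `N ≥ 5`, `p ≥ (N+4+2α+β)/(N−4−β)`, `α > −4`, `0 ≤ β ≤ (N−4)/2`, then `C(N,p,α,β) > 0`. -/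
theorem stmt5 (N p α β : ℝ) (hN : 5 ≤ N) (hα : -4 < α) (hβ0 : 0 ≤ β)
    (hβ : β ≤ (N - 4) / 2) (hp : (N + 4 + 2 * α + β) / (N - 4 - β) ≤ p) :
    0 < (N - 2) * (2 + β)
        + 2 * ((4 + α + β) / (p - 1)) * (N - 4 - β - (4 + α + β) / (p - 1))
        - β ^ 2 / 8 := by
  have hm : 0 < N - 4 - β := by nlinarith
  have hpm : N + 4 + 2 * α + β ≤ p * (N - 4 - β) := by
    have := (div_le_iff₀ hm).mp hp
    linarith
  have hp1 : 1 < p := by nlinarith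
  have hq : 0 < p - 1 := by linarith
  set L := (4 + α + β) / (p - 1) with hL
  have hLpos : 0 < L := by
    apply div_pos <;> linarith
  have hLle : L ≤ (N - 4 - β) / 2 := by
    rw [hL, div_le_div_iff₀ hq (by norm_num : (0:ℝ) < 2)]
    nlinarith
  nlinarith [mul_nonneg hLpos.le (by linarith : (0:ℝ) ≤ N - 4 - β - L)]
end

section
/- Pointwise algebraic inequality: for any C² functions φ > 0, ζ on an open set, and any real a ≥ 0, at every point Δφ · Δ(ζ²/φ) − |Δζ|² = −(ζφ^{−1}Δφ − Δζ)² − 2(−φ^{−1}Δφ)|∇ζ − ζφ^{−1}∇φ|², so in particular if −Δφ ≥ 0 then Δφ·Δ(ζ²/φ) ≤ |Δζ|². -/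
open Filter Topology RealInnerProductSpace Gradient

section SecondDirDeriv

variable {E : Type*} [NormedAddCommGroup E] [NormedSpace ℝ E] {f g : E → ℝ} {x : E}

noncomputable def secondDirDeriv (f : E → ℝ) (v x : E) : ℝ :=
  fderiv ℝ (fun y => fderiv ℝ f y v) x v

theorem ContDiffAt.eventually_differentiableAt (hf : ContDiffAt ℝ 2 f x) :
    ∀ᶠ y in 𝓝 x, DifferentiableAt ℝ f y :=
  (hf.eventually (by simp)).mono fun _ hy => hy.differentiableAt two_ne_zero

theorem ContDiffAt.differentiableAt_fderiv_apply (hf : ContDiffAt ℝ 2 f x) (v : E) :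
    DifferentiableAt ℝ (fun y => fderiv ℝ f y v) x :=
  ((hf.fderiv_right one_add_one_eq_two.le).differentiableAt one_ne_zero).clm_apply
    (differentiableAt_const v)

theorem fderiv_fun_inv_apply (hf : DifferentiableAt ℝ f x) (hx : f x ≠ 0) (v : E) :
    fderiv ℝ (fun y => (f y)⁻¹) x v = -((f x)⁻¹ ^ 2 * fderiv ℝ f x v) := by
  rw [HasFDerivAt.fderiv (f := fun y => (f y)⁻¹)
    ((hasDerivAt_inv hx).comp_hasFDerivAt x hf.hasFDerivAt)]
  simp [inv_pow]

theorem secondDirDeriv_mul (hf : ContDiffAt ℝ 2 f x) (hg : ContDiffAt ℝ 2 g x) (v : E) :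
    secondDirDeriv (fun y => f y * g y) v x =
      secondDirDeriv f v x * g x + 2 * (fderiv ℝ f x v * fderiv ℝ g x v)
        + f x * secondDirDeriv g v x := by
  have hfirst : (fun y => fderiv ℝ (fun y => f y * g y) y v) =ᶠ[𝓝 x]
      fun y => f y * fderiv ℝ g y v + g y * fderiv ℝ f y v := by
    filter_upwards [hf.eventually_differentiableAt, hg.eventually_differentiableAt]
      with y hfy hgy
    simp [fderiv_fun_mul hfy hgy]
  have hf1 := hf.differentiableAt two_ne_zero
  have hg1 := hg.differentiableAt two_ne_zero
  have hf2 := hf.differentiableAt_fderiv_apply v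
  have hg2 := hg.differentiableAt_fderiv_apply v
  rw [secondDirDeriv, hfirst.fderiv_eq, fderiv_fun_add (hf1.fun_mul hg2) (hg1.fun_mul hf2),
    fderiv_fun_mul hf1 hg2, fderiv_fun_mul hg1 hf2]
  simp only [add_apply, smul_apply, smul_eq_mul, secondDirDeriv]
  ring

theorem secondDirDeriv_inv (hf : ContDiffAt ℝ 2 f x) (hx : f x ≠ 0) (v : E) :
    secondDirDeriv (fun y => (f y)⁻¹) v x =
      2 * (f x)⁻¹ ^ 3 * fderiv ℝ f x v ^ 2 - (f x)⁻¹ ^ 2 * secondDirDeriv f v x := by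
  have hfirst : (fun y => fderiv ℝ (fun y => (f y)⁻¹) y v) =ᶠ[𝓝 x]
      fun y => -((f y)⁻¹ ^ 2 * fderiv ℝ f y v) := by
    filter_upwards [hf.eventually_differentiableAt, hf.continuousAt.eventually_ne hx]
      with y hfy hy
    exact fderiv_fun_inv_apply hfy hy v
  have hf1 := hf.differentiableAt two_ne_zero
  have hinv := hf1.fun_inv hx
  rw [secondDirDeriv, hfirst.fderiv_eq, fderiv_fun_neg,
    fderiv_fun_mul (hinv.fun_pow 2) (hf.differentiableAt_fderiv_apply v), fderiv_fun_pow 2 hinv]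
  simp only [neg_apply, add_apply, smul_apply, smul_eq_mul, fderiv_fun_inv_apply hf1 hx, secondDirDeriv]
  ring

theorem secondDirDeriv_sq_div {ζ φ : E → ℝ} (hζ : ContDiffAt ℝ 2 ζ x) (hφ : ContDiffAt ℝ 2 φ x)
    (hx : φ x ≠ 0) (v : E) :
    secondDirDeriv (fun y => ζ y ^ 2 / φ y) v x =
      2 * (φ x)⁻¹ * (fderiv ℝ ζ x v * fderiv ℝ ζ x v)
        + 2 * ζ x * (φ x)⁻¹ * secondDirDeriv ζ v x
        - 4 * ζ x * (φ x)⁻¹ ^ 2 * (fderiv ℝ ζ x v * fderiv ℝ φ x v)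
        + 2 * ζ x ^ 2 * (φ x)⁻¹ ^ 3 * (fderiv ℝ φ x v * fderiv ℝ φ x v)
        - ζ x ^ 2 * (φ x)⁻¹ ^ 2 * secondDirDeriv φ v x := by
  have hfun : (fun y => ζ y ^ 2 / φ y) = fun y => (ζ y * ζ y) * (φ y)⁻¹ := by
    simp only [sq, div_eq_mul_inv]
  have hζ1 := hζ.differentiableAt two_ne_zero
  rw [hfun, secondDirDeriv_mul (hζ.mul hζ) (hφ.fun_inv hx), secondDirDeriv_mul hζ hζ,
    secondDirDeriv_inv hφ hx, fderiv_fun_mul hζ1 hζ1,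
    fderiv_fun_inv_apply (hφ.differentiableAt two_ne_zero) hx]
  simp only [add_apply, smul_apply, smul_eq_mul]
  ring

end SecondDirDeriv

section Laplacian

variable {N : ℕ} {f g ζ φ : EuclideanSpace ℝ (Fin N) → ℝ} {x : EuclideanSpace ℝ (Fin N)}

theorem lap_eq_sum_secondDirDeriv :
    lap f x = ∑ i, secondDirDeriv f (EuclideanSpace.single i 1) x := rfl

theorem fderiv_single_eq_gradient_apply (i : Fin N) :
    fderiv ℝ f x (EuclideanSpace.single i 1) = ∇ f x i := by
  rw [← inner_gradient_left, EuclideanSpace.inner_single_right, conj_trivial, one_mul]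

theorem sum_fderiv_single_mul_fderiv_single :
    ∑ i, fderiv ℝ f x (EuclideanSpace.single i 1) * fderiv ℝ g x (EuclideanSpace.single i 1) =
      ⟪∇ f x, ∇ g x⟫ := by
  simp only [fderiv_single_eq_gradient_apply, PiLp.inner_apply, RCLike.inner_apply, conj_trivial,
    mul_comm]

theorem lap_sq_div (hζ : ContDiffAt ℝ 2 ζ x) (hφ : ContDiffAt ℝ 2 φ x) (hx : φ x ≠ 0) :
    lap (fun y => ζ y ^ 2 / φ y) x =
      2 * (φ x)⁻¹ * ‖∇ ζ x‖ ^ 2 + 2 * ζ x * (φ x)⁻¹ * lap ζ x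
        - 4 * ζ x * (φ x)⁻¹ ^ 2 * ⟪∇ ζ x, ∇ φ x⟫
        + 2 * ζ x ^ 2 * (φ x)⁻¹ ^ 3 * ‖∇ φ x‖ ^ 2 - ζ x ^ 2 * (φ x)⁻¹ ^ 2 * lap φ x := by
  simp only [lap_eq_sum_secondDirDeriv, secondDirDeriv_sq_div hζ hφ hx, Finset.sum_add_distrib,
    Finset.sum_sub_distrib, ← Finset.mul_sum, sum_fderiv_single_mul_fderiv_single,
    real_inner_self_eq_norm_sq]

theorem lap_mul_lap_sq_div_sub_sq (hζ : ContDiffAt ℝ 2 ζ x) (hφ : ContDiffAt ℝ 2 φ x)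
    (hx : φ x ≠ 0) :
    lap φ x * lap (fun y => ζ y ^ 2 / φ y) x - lap ζ x ^ 2 =
      -(ζ x * (φ x)⁻¹ * lap φ x - lap ζ x) ^ 2
        - 2 * (-(φ x)⁻¹ * lap φ x) * ‖∇ ζ x - ζ x • (φ x)⁻¹ • ∇ φ x‖ ^ 2 := by
  rw [lap_sq_div hζ hφ hx, norm_sub_sq_real, inner_smul_right, inner_smul_right, norm_smul,
    norm_smul, mul_pow, mul_pow, Real.norm_eq_abs, Real.norm_eq_abs, sq_abs, sq_abs]
  ring

end Laplacian

/-- Pointwise algebraic identity: for `C²` functions `φ > 0` and `ζ` on an open set, at every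
point `Δφ·Δ(ζ²/φ) − |Δζ|² = −(ζφ⁻¹Δφ − Δζ)² − 2(−φ⁻¹Δφ)|∇ζ − ζφ⁻¹∇φ|²`; in particular if
`−Δφ ≥ 0` then `Δφ·Δ(ζ²/φ) ≤ |Δζ|²`. -/
theorem stmt12 {N : ℕ} (Ω : Set (EuclideanSpace ℝ (Fin N))) (hΩ : IsOpen Ω)
    (φ ζ : EuclideanSpace ℝ (Fin N) → ℝ)
    (hφ : ContDiffOn ℝ 2 φ Ω) (hζ : ContDiffOn ℝ 2 ζ Ω)
    (hφpos : ∀ x ∈ Ω, 0 < φ x) :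
    ∀ x ∈ Ω,
      (lap φ x * lap (fun y => (ζ y) ^ 2 / φ y) x - (lap ζ x) ^ 2
          = -(ζ x * (φ x)⁻¹ * lap φ x - lap ζ x) ^ 2
            - 2 * (-(φ x)⁻¹ * lap φ x)
              * ‖gradient ζ x - ζ x • (φ x)⁻¹ • gradient φ x‖ ^ 2)
      ∧ (0 ≤ -lap φ x →
          lap φ x * lap (fun y => (ζ y) ^ 2 / φ y) x ≤ (lap ζ x) ^ 2) := by
  intro x hx
  have hpos := hφpos x hx
  have hid := lap_mul_lap_sq_div_sub_sq (hζ.contDiffAt (hΩ.mem_nhds hx))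
    (hφ.contDiffAt (hΩ.mem_nhds hx)) hpos.ne'
  refine ⟨hid, fun hlap => sub_nonpos.1 ?_⟩
  have hweight : 0 ≤ -(φ x)⁻¹ * lap φ x := by
    rw [neg_mul, ← mul_neg]
    exact mul_nonneg (inv_nonneg.2 hpos.le) hlap
  rw [hid]
  linarith [sq_nonneg (ζ x * (φ x)⁻¹ * lap φ x - lap ζ x),
    mul_nonneg hweight (sq_nonneg ‖∇ ζ x - ζ x • (φ x)⁻¹ • ∇ φ x‖)]
end

section
/- Spherical-harmonic stability inequality for singular solutions: let Ψ ∈ C⁴(S^{N−1}) and suppose u(r,θ) = r^{−λ}Ψ(θ) (with λ = (4+α+β)/(p−1)) is a stable solution of Δ(|x|^{−β}Δu)=|x|^α|u|^{p−1}u on ℝ^N\{0}, and Ψ satisfies both the eigenvalue-type equation ∫_{S^{N−1}}(|Δ_θΨ|² + Υ|∇_θΨ|² + ΓΨ²) = ∫_{S^{N−1}}|Ψ|^{p+1} and the stability inequality p∫_{S^{N−1}}|Ψ|^{p+1} ≤ ∫_{S^{N−1}}[|Δ_θΨ|² + ((N+β)(N−4−β)/2)|∇_θΨ|² + ((N+β)²(N−4−β)²/16)Ψ²].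 If pΥ > (N+β)(N−4−β)/2 and pΓ > (N+β)²(N−4−β)²/16, then Ψ ≡ 0. -/
open MeasureTheory

/-- Spherical-harmonic stability inequality for singular solutions. Here `Ψ` is a function on
the unit sphere `S^{N−1}`, `DΨ` stands for `Δ_θΨ` and `GΨ` for `|∇_θΨ|²` (so `GΨ ≥ 0`), and
`σ` is the (full-support, finite) surface measure on the sphere. If `Ψ` satisfies both
`∫(|Δ_θΨ|² + Υ|∇_θΨ|² + ΓΨ²) = ∫|Ψ|^{p+1}` and the stability inequality
`p∫|Ψ|^{p+1} ≤ ∫[|Δ_θΨ|² + ((N+β)(N−4−β)/2)|∇_θΨ|² + ((N+β)²(N−4−β)²/16)Ψ²]`,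
and `pΥ > (N+β)(N−4−β)/2`, `pΓ > (N+β)²(N−4−β)²/16`, then `Ψ ≡ 0`. -/
theorem stmt17 {N : ℕ} (hN : 5 ≤ N) (p α β lam Υ Γ : ℝ) (hp : 1 < p) (hα : -4 < α)
    (hβ0 : 0 ≤ β) (hβ : β ≤ ((N : ℝ) - 4) / 2)
    (hlam : lam = (4 + α + β) / (p - 1))
    (hΥ : Υ = lam * ((N : ℝ) - 2 - lam) + (lam + β + 2) * ((N : ℝ) - 4 - β - lam))
    (hΓ : Γ = lam * ((N : ℝ) - 2 - lam) * (lam + β + 2) * ((N : ℝ) - 4 - β - lam))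
    (σ : Measure (Metric.sphere (0 : EuclideanSpace ℝ (Fin N)) 1))
    [IsFiniteMeasure σ] [σ.IsOpenPosMeasure]
    (Ψ DΨ GΨ : Metric.sphere (0 : EuclideanSpace ℝ (Fin N)) 1 → ℝ)
    (hΨc : Continuous Ψ) (hDΨc : Continuous DΨ) (hGΨc : Continuous GΨ)
    (hGΨ : ∀ θ, 0 ≤ GΨ θ)
    (heig : ∫ θ, ((DΨ θ) ^ 2 + Υ * GΨ θ + Γ * (Ψ θ) ^ 2) ∂σ = ∫ θ, |Ψ θ| ^ (p + 1) ∂σ)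
    (hstab : p * ∫ θ, |Ψ θ| ^ (p + 1) ∂σ
      ≤ ∫ θ, ((DΨ θ) ^ 2 + (((N : ℝ) + β) * ((N : ℝ) - 4 - β) / 2) * GΨ θ
          + (((N : ℝ) + β) ^ 2 * ((N : ℝ) - 4 - β) ^ 2 / 16) * (Ψ θ) ^ 2) ∂σ)
    (hcoef1 : ((N : ℝ) + β) * ((N : ℝ) - 4 - β) / 2 < p * Υ)
    (hcoef2 : ((N : ℝ) + β) ^ 2 * ((N : ℝ) - 4 - β) ^ 2 / 16 < p * Γ) :
    ∀ θ, Ψ θ = 0 := by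
  set c1 : ℝ := ((N : ℝ) + β) * ((N : ℝ) - 4 - β) / 2 with hc1
  set c2 : ℝ := ((N : ℝ) + β) ^ 2 * ((N : ℝ) - 4 - β) ^ 2 / 16 with hc2
  set f : Metric.sphere (0 : EuclideanSpace ℝ (Fin N)) 1 → ℝ :=
    fun θ => (p - 1) * (DΨ θ) ^ 2 + (p * Υ - c1) * GΨ θ + (p * Γ - c2) * (Ψ θ) ^ 2 with hf
  have hfc : Continuous f := by fun_prop
  have hfnn : ∀ θ, 0 ≤ f θ := fun θ => by
    have h1 : (0:ℝ) ≤ (p - 1) * (DΨ θ) ^ 2 :=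
      mul_nonneg (by linarith) (sq_nonneg _)
    have h2 : (0:ℝ) ≤ (p * Υ - c1) * GΨ θ :=
      mul_nonneg (by linarith) (hGΨ θ)
    have h3 : (0:ℝ) ≤ (p * Γ - c2) * (Ψ θ) ^ 2 :=
      mul_nonneg (by linarith) (sq_nonneg _)
    simp only [hf]
    linarith
  have int_of_cont : ∀ g : Metric.sphere (0 : EuclideanSpace ℝ (Fin N)) 1 → ℝ,
      Continuous g → Integrable g σ := fun g hg =>
    hg.integrable_of_hasCompactSupport (HasCompactSupport.of_compactSpace g)
  have hg1 : Integrable (fun θ => (DΨ θ) ^ 2 + Υ * GΨ θ + Γ * (Ψ θ) ^ 2) σ :=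
    int_of_cont _ (by fun_prop)
  have hg2 : Integrable (fun θ => (DΨ θ) ^ 2 + c1 * GΨ θ + c2 * (Ψ θ) ^ 2) σ :=
    int_of_cont _ (by fun_prop)
  have hfint : Integrable f σ := int_of_cont _ hfc
  have hsplit : ∫ θ, f θ ∂σ
      = p * (∫ θ, ((DΨ θ) ^ 2 + Υ * GΨ θ + Γ * (Ψ θ) ^ 2) ∂σ)
        - ∫ θ, ((DΨ θ) ^ 2 + c1 * GΨ θ + c2 * (Ψ θ) ^ 2) ∂σ := by
    rw [← integral_const_mul, ← integral_sub (hg1.const_mul p) hg2]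
    congr 1 with θ
    simp only [hf]
    ring
  have hle : ∫ θ, f θ ∂σ ≤ 0 := by
    rw [hsplit, heig]
    linarith
  have hge : 0 ≤ ∫ θ, f θ ∂σ := integral_nonneg hfnn
  have hzero : ∫ θ, f θ ∂σ = 0 := le_antisymm hle hge
  have hae : f =ᵐ[σ] 0 :=
    (integral_eq_zero_iff_of_nonneg hfnn hfint).mp hzero
  have hfeq : f = 0 := (hfc.ae_eq_iff_eq σ continuous_const).mp hae
  intro θ
  have hfθ : f θ = 0 := congrFun hfeq θ
  have h1 : (0:ℝ) ≤ (p - 1) * (DΨ θ) ^ 2 :=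
    mul_nonneg (by linarith) (sq_nonneg _)
  have h2 : (0:ℝ) ≤ (p * Υ - c1) * GΨ θ := mul_nonneg (by linarith) (hGΨ θ)
  have h3 : (p * Γ - c2) * (Ψ θ) ^ 2 ≤ 0 := by
    simp only [hf] at hfθ; linarith
  have hpos : 0 < p * Γ - c2 := by linarith
  have hsq : (Ψ θ) ^ 2 = 0 :=
    le_antisymm (nonpos_of_mul_nonpos_right (by linarith [mul_comm (p * Γ - c2) ((Ψ θ)^2)]) hpos) (sq_nonneg _)
  exact pow_eq_zero_iff (by norm_num) |>.mp hsq
end
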